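/- arXiv:2004.08227 — 4 statements merged into one kernel-verified Lean document; each statement's English description precedes it below -/
import Mathlib

section
/- Let Y be a finite nonempty label set, let θ_u, θ_v : Y → ℝ and θ_uv : Y × Y → ℝ be costs on a single edge, and for a reparametrization φ = (φ_{v→u}, φ_{u→v}) ∈ ℝ^Y × ℝ^Y set θ^φ_u = θ_u + φ_{v→u}, θ^φ_v = θ_v + φ_{u→v}, θ^φ_uv(s,t) = θ_uv(s,t) − φ_{v→u}(s) − φ_{u→v}(t), and D_uv(φ) = min_{(s,t)∈Y×Y} θ^φ_uv(s,t) + min_{s∈Y} θ^φ_u(s) + min_{t∈Y} θ^φ_v(t). Then φ maximizes D_uv over all reparametrizations if and only if there exists (s,t) ∈ Y × Y such that θ^φ_u(s) = min_{s'} θ^φ_u(s'), θ^φ_v(t) = min_{t'} θ^φ_v(t'), and θ^φ_uv(s,t) = min_{(s',t')} θ^φ_uv(s',t'). -/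
/-- Minimum of a real-valued function over a finite nonempty type. -/
noncomputable def fmin {Y : Type*} [Fintype Y] [Nonempty Y] (f : Y → ℝ) : ℝ :=
  Finset.univ.inf' Finset.univ_nonempty f

/-- MPLP update, unary at `u`: `θ^M_u(s) = (1/2)·min_t g(s,t)`. -/
noncomputable def thetaMu {Y : Type*} [Fintype Y] [Nonempty Y] (g : Y × Y → ℝ) (s : Y) : ℝ :=
  (1 / 2) * fmin (fun t => g (s, t))

/-- MPLP update, unary at `v`: `θ^M_v(t) = (1/2)·min_s g(s,t)`. -/
noncomputable def thetaMv {Y : Type*} [Fintype Y] [Nonempty Y] (g : Y × Y → ℝ) (t : Y) : ℝ :=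
  (1 / 2) * fmin (fun s => g (s, t))

/-- MPLP++ (handshake) update, unary at `v`: `θ^H_v(t) = min_s [g(s,t) − θ^M_u(s)]`. -/
noncomputable def thetaHv {Y : Type*} [Fintype Y] [Nonempty Y] (g : Y × Y → ℝ) (t : Y) : ℝ :=
  fmin (fun s => g (s, t) - thetaMu g s)

/-- MPLP++ (handshake) update, unary at `u`: `θ^H_u(s) = min_t [g(s,t) − θ^H_v(t)]`. -/
noncomputable def thetaHu {Y : Type*} [Fintype Y] [Nonempty Y] (g : Y × Y → ℝ) (s : Y) : ℝ :=
  fmin (fun t => g (s, t) - thetaHv g t)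

/-- Uniform update, unary at `u`: constant `(1/2)·min_{(s',t')} g(s',t')`. -/
noncomputable def thetaUu {Y : Type*} [Fintype Y] [Nonempty Y] (g : Y × Y → ℝ) (_ : Y) : ℝ :=
  (1 / 2) * fmin g

/-- Uniform update, unary at `v`: constant `(1/2)·min_{(s',t')} g(s',t')`. -/
noncomputable def thetaUv {Y : Type*} [Fintype Y] [Nonempty Y] (g : Y × Y → ℝ) (_ : Y) : ℝ :=
  (1 / 2) * fmin g

/-- The restricted dual of a single edge `uv` as a function of the reparametrization
`φ = (φ_{v→u}, φ_{u→v})`. -/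
noncomputable def Duv {Y : Type*} [Fintype Y] [Nonempty Y]
    (θu θv : Y → ℝ) (θuv : Y × Y → ℝ) (φ : (Y → ℝ) × (Y → ℝ)) : ℝ :=
  fmin (fun p : Y × Y => θuv p - φ.1 p.1 - φ.2 p.2)
    + fmin (fun s => θu s + φ.1 s) + fmin (fun t => θv t + φ.2 t)


lemma fmin_le {Y : Type*} [Fintype Y] [Nonempty Y] (f : Y → ℝ) (x : Y) : fmin f ≤ f x :=
  Finset.inf'_le _ (Finset.mem_univ x)

lemma exists_fmin_eq {Y : Type*} [Fintype Y] [Nonempty Y] (f : Y → ℝ) : ∃ x, fmin f = f x := by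
  obtain ⟨x, -, hx⟩ := Finset.exists_mem_eq_inf' (Finset.univ_nonempty (α := Y)) f
  exact ⟨x, hx⟩

/-- Block optimality condition: `φ` maximizes the restricted dual `D_uv` iff there is a
label pair that is simultaneously unary-optimal at both endpoints and pairwise-optimal. -/
theorem block_optimality {Y : Type*} [Fintype Y] [Nonempty Y]
    (θu θv : Y → ℝ) (θuv : Y × Y → ℝ) (φ : (Y → ℝ) × (Y → ℝ)) :
    (∀ ψ : (Y → ℝ) × (Y → ℝ), Duv θu θv θuv ψ ≤ Duv θu θv θuv φ) ↔
    ∃ s t : Y,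
      θu s + φ.1 s = fmin (fun s' => θu s' + φ.1 s') ∧
      θv t + φ.2 t = fmin (fun t' => θv t' + φ.2 t') ∧
      θuv (s, t) - φ.1 s - φ.2 t = fmin (fun p : Y × Y => θuv p - φ.1 p.1 - φ.2 p.2) := by
  constructor
  · intro h
    -- D(φ) ≥ fmin F where F p = θuv p + θu p.1 + θv p.2
    set F : Y × Y → ℝ := fun p => θuv p + θu p.1 + θv p.2 with hF
    have hψ := h ((fun s => -θu s), (fun t => -θv t))
    have e1 : (fun p : Y × Y => θuv p - (-θu p.1) - (-θv p.2)) = F := by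
      funext p; simp [hF]
    have e2 : (fun s => θu s + (-θu s)) = fun _ : Y => (0 : ℝ) := by funext s; ring
    have e3 : (fun t => θv t + (-θv t)) = fun _ : Y => (0 : ℝ) := by funext t; ring
    have hz : fmin (fun _ : Y => (0 : ℝ)) = 0 := Finset.inf'_const _ _
    have hD : fmin F ≤ Duv θu θv θuv φ := by
      have : Duv θu θv θuv ((fun s => -θu s), (fun t => -θv t)) = fmin F := by
        simp only [Duv, e1, e2, e3, hz]; ring
      linarith [hψ, this.symm]
    obtain ⟨⟨s, t⟩, hst⟩ := exists_fmin_eq F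
    refine ⟨s, t, ?_⟩
    have h1 : fmin (fun s' => θu s' + φ.1 s') ≤ θu s + φ.1 s := fmin_le _ s
    have h2 : fmin (fun t' => θv t' + φ.2 t') ≤ θv t + φ.2 t := fmin_le _ t
    have h3 : fmin (fun p : Y × Y => θuv p - φ.1 p.1 - φ.2 p.2) ≤ θuv (s, t) - φ.1 s - φ.2 t :=
      fmin_le _ (s, t)
    have hFst : F (s, t) = θuv (s, t) + θu s + θv t := rfl
    have hsum : Duv θu θv θuv φ ≤ F (s, t) := by
      rw [hst] at hD
      simp only [Duv]
      linarith [hFst]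
    simp only [Duv] at hD
    rw [hst] at hD
    refine ⟨by linarith [hFst], by linarith [hFst], by linarith [hFst]⟩
  · rintro ⟨s, t, h1, h2, h3⟩ ψ
    have a1 : fmin (fun s' => θu s' + ψ.1 s') ≤ θu s + ψ.1 s := fmin_le _ s
    have a2 : fmin (fun t' => θv t' + ψ.2 t') ≤ θv t + ψ.2 t := fmin_le _ t
    have a3 : fmin (fun p : Y × Y => θuv p - ψ.1 p.1 - ψ.2 p.2) ≤ θuv (s, t) - ψ.1 s - ψ.2 t :=
      fmin_le _ (s, t)
    simp only [Duv]
    linarith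
end

section
/- The MPLP++ (handshake) update is not monotonous: with Y = {1,2}, there exist θ_u, θ'_u, θ_v, θ'_v : Y → ℝ and θ_uv : Y × Y → ℝ with θ_u ≥ θ'_u and θ_v ≥ θ'_v componentwise, such that for g(s,t) = θ_u(s) + θ_v(t) + θ_uv(s,t) and g'(s,t) = θ'_u(s) + θ'_v(t) + θ_uv(s,t) the inequality θ^H_u[g] ≥ θ^H_u[g'] fails in some component. A witness is θ_u = (4,0), θ_v = (2,0), θ'_u = (0,0), θ'_v = (0,0), θ_uv = ((0,1),(7,5)). -/
lemma fmin_fin2 (f : Fin 2 → ℝ) : fmin f = min (f 0) (f 1) := by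
  apply le_antisymm
  · exact le_min (Finset.inf'_le _ (Finset.mem_univ 0)) (Finset.inf'_le _ (Finset.mem_univ 1))
  · apply Finset.le_inf'
    intro b _
    fin_cases b
    · exact min_le_left _ _
    · exact min_le_right _ _

/-- The MPLP++ (handshake) update is not monotonous: on `Y = Fin 2` there are costs with
`θ_u ≥ θ'_u`, `θ_v ≥ θ'_v` componentwise for which the handshake-updated unary at `u`
fails the componentwise inequality.  (A witness is `θ_u = (4,0)`, `θ_v = (2,0)`,
`θ'_u = θ'_v = (0,0)`, `θ_uv = ((0,1),(7,5))`.) -/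
theorem mplpp_not_monotonous :
    ∃ (θu θu' θv θv' : Fin 2 → ℝ) (θuv : Fin 2 × Fin 2 → ℝ),
      (∀ s, θu' s ≤ θu s) ∧ (∀ t, θv' t ≤ θv t) ∧
      ∃ s : Fin 2, thetaHu (fun p => θu p.1 + θv p.2 + θuv p) s <
                   thetaHu (fun p => θu' p.1 + θv' p.2 + θuv p) s := by
  refine ⟨![4,0], ![0,0], ![2,0], ![0,0], fun p => !![0,1;7,5] p.1 p.2, ?_, ?_, 1, ?_⟩
  · intro s; fin_cases s <;> norm_num
  · intro t; fin_cases t <;> norm_num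
  · simp only [thetaHu, thetaHv, thetaMu, fmin_fin2]
    norm_num [min_def]
end

section
/- Let γ and μ be BCA-updates, i.e., maps sending each g : Y × Y → ℝ to a pair of unary vectors (γ_u[g], γ_v[g]) ∈ ℝ^Y × ℝ^Y such that min_{(s,t)} [g(s,t) − γ_u[g](s) − γ_v[g](t)] = 0, and similarly for μ. Suppose γ dominates μ (γ_u[g] ≥ μ_u[g] and γ_v[g] ≥ μ_v[g] componentwise for every g) and μ is monotonous (θ_u ≥ θ'_u and θ_v ≥ θ'_v componentwise implies μ[θ_u + θ_uv + θ_v] ≥ μ[θ'_u + θ_uv + θ'_v] componentwise, for every θ_uv). Then for any pairwise graphical model (V, E, Y, θ) and any ordering of E in which each edge occurs exactly once, the dual value after the BCA-iteration that processes every edge with γ is at least the dual value after the BCA-iteration that processes every edge in the same order with μ: D(α) ≥ D(β). -/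
/-- The cost vector of a pairwise graphical model: unary costs for every vertex and
pairwise costs for every (potential) edge. -/
structure Costs (V Y : Type*) where
  un : V → Y → ℝ
  pw : V × V → Y × Y → ℝ

/-- The dual value `D(θ) = Σ_u min_s θ_u(s) + Σ_{uv∈E} min_{(s,t)} θ_uv(s,t)`. -/
noncomputable def dual {V Y : Type*} [Fintype V] [Fintype Y] [Nonempty Y]
    (E : Finset (V × V)) (c : Costs V Y) : ℝ :=
  (∑ u, fmin (c.un u)) + ∑ e ∈ E, fmin (c.pw e)

/-- One MPLP++ edge update of the cost vector at edge `e = (u,v)`. -/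
noncomputable def processEdge {V Y : Type*} [Fintype Y] [Nonempty Y] [DecidableEq V]
    (c : Costs V Y) (e : V × V) : Costs V Y :=
  let g : Y × Y → ℝ := fun p => c.un e.1 p.1 + c.un e.2 p.2 + c.pw e p
  let θM : Y → ℝ := fun s => (1 / 2) * fmin (fun t => g (s, t))
  let θHv : Y → ℝ := fun t => fmin (fun s => g (s, t) - θM s)
  let θHu : Y → ℝ := fun s => fmin (fun t => g (s, t) - θHv t)
  { un := fun w => if w = e.1 then θHu else if w = e.2 then θHv else c.un w
    pw := fun e' => if e' = e then (fun p => g p - θHu p.1 - θHv p.2) else c.pw e' }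

/-- One MPLP++ iteration `H`: process all edges in the given fixed order. -/
noncomputable def mplppIter {V Y : Type*} [Fintype Y] [Nonempty Y] [DecidableEq V]
    (order : List (V × V)) (c : Costs V Y) : Costs V Y :=
  order.foldl processEdge c

/-- One generic BCA edge update of the cost vector at edge `e = (u,v)`, using the
reparametrization mapping `γ` sending the aggregated cost to the new unary vectors. -/
noncomputable def processEdgeWith {V Y : Type*} [Fintype Y] [Nonempty Y] [DecidableEq V]
    (γ : (Y × Y → ℝ) → (Y → ℝ) × (Y → ℝ)) (c : Costs V Y) (e : V × V) : Costs V Y :=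
  let g : Y × Y → ℝ := fun p => c.un e.1 p.1 + c.un e.2 p.2 + c.pw e p
  { un := fun w => if w = e.1 then (γ g).1 else if w = e.2 then (γ g).2 else c.un w
    pw := fun e' => if e' = e then (fun p => g p - (γ g).1 p.1 - (γ g).2 p.2) else c.pw e' }

/-!
Run the two iterations side by side. Since each edge is processed only once, an edge not yet
processed still carries its original pairwise cost in both runs, and the unary costs of the
`μ`-run stay below those of the `γ`-run: at the processed edge, monotonicity of `μ` and dominance
give `μ[g_μ] ≤ μ[g_γ] ≤ γ[g_γ]`. At the end every pairwise cost has been replaced by a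
BCA-remainder, of minimum `0` in both runs, so the dual values differ only in the unary minima.
-/

lemma fmin_mono {Y : Type*} [Fintype Y] [Nonempty Y] {f g : Y → ℝ} (h : f ≤ g) :
    fmin f ≤ fmin g :=
  Finset.le_inf' _ _ fun x _ => (Finset.inf'_le _ (Finset.mem_univ x)).trans (h x)

section BCA

variable {V Y : Type*} [Fintype Y] [Nonempty Y] [DecidableEq V]

def IsBCAUpdate (γ : (Y × Y → ℝ) → (Y → ℝ) × (Y → ℝ)) : Prop :=
  ∀ g : Y × Y → ℝ, fmin (fun p : Y × Y => g p - (γ g).1 p.1 - (γ g).2 p.2) = 0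

def UpdateDominates (γ μ : (Y × Y → ℝ) → (Y → ℝ) × (Y → ℝ)) : Prop :=
  ∀ g : Y × Y → ℝ, (μ g).1 ≤ (γ g).1 ∧ (μ g).2 ≤ (γ g).2

def IsMonotoneUpdate (μ : (Y × Y → ℝ) → (Y → ℝ) × (Y → ℝ)) : Prop :=
  ∀ (θu θu' θv θv' : Y → ℝ) (θuv : Y × Y → ℝ), θu' ≤ θu → θv' ≤ θv →
    (μ (fun p => θu' p.1 + θv' p.2 + θuv p)).1 ≤ (μ (fun p => θu p.1 + θv p.2 + θuv p)).1 ∧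
    (μ (fun p => θu' p.1 + θv' p.2 + θuv p)).2 ≤ (μ (fun p => θu p.1 + θv p.2 + θuv p)).2

def edgeCost (c : Costs V Y) (e : V × V) : Y × Y → ℝ :=
  fun p => c.un e.1 p.1 + c.un e.2 p.2 + c.pw e p

lemma processEdgeWith_un (γ : (Y × Y → ℝ) → (Y → ℝ) × (Y → ℝ)) (c : Costs V Y) (e : V × V)
    (w : V) :
    (processEdgeWith γ c e).un w =
      if w = e.1 then (γ (edgeCost c e)).1 else if w = e.2 then (γ (edgeCost c e)).2
      else c.un w :=
  rfl

lemma processEdgeWith_pw_self (γ : (Y × Y → ℝ) → (Y → ℝ) × (Y → ℝ)) (c : Costs V Y)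
    (e : V × V) :
    (processEdgeWith γ c e).pw e =
      fun p => edgeCost c e p - (γ (edgeCost c e)).1 p.1 - (γ (edgeCost c e)).2 p.2 :=
  if_pos rfl

lemma processEdgeWith_pw_of_ne (γ : (Y × Y → ℝ) → (Y → ℝ) × (Y → ℝ)) (c : Costs V Y)
    {e e' : V × V} (h : e' ≠ e) : (processEdgeWith γ c e).pw e' = c.pw e' :=
  if_neg h

lemma foldl_processEdgeWith_pw_of_notMem (γ : (Y × Y → ℝ) → (Y → ℝ) × (Y → ℝ))
    {l : List (V × V)} {e : V × V} (he : e ∉ l) (c : Costs V Y) :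
    (l.foldl (processEdgeWith γ) c).pw e = c.pw e := by
  induction l generalizing c with
  | nil => rfl
  | cons a l ih =>
    rw [List.foldl_cons, ih (List.not_mem_of_not_mem_cons he),
      processEdgeWith_pw_of_ne γ c (List.ne_of_not_mem_cons he)]

lemma fmin_foldl_processEdgeWith_pw {γ : (Y × Y → ℝ) → (Y → ℝ) × (Y → ℝ)}
    (hγ : IsBCAUpdate γ) {l : List (V × V)} (hl : l.Nodup) {e : V × V} (he : e ∈ l)
    (c : Costs V Y) : fmin ((l.foldl (processEdgeWith γ) c).pw e) = 0 := by
  induction l generalizing c with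
  | nil => cases he
  | cons a l ih =>
    obtain ⟨ha, hl⟩ := List.nodup_cons.mp hl
    rw [List.foldl_cons]
    rcases List.mem_cons.mp he with rfl | he
    · rw [foldl_processEdgeWith_pw_of_notMem γ ha, processEdgeWith_pw_self]
      exact hγ _
    · exact ih hl he _

lemma processEdgeWith_un_le {γ μ : (Y × Y → ℝ) → (Y → ℝ) × (Y → ℝ)}
    (hdom : UpdateDominates γ μ) (hmono : IsMonotoneUpdate μ) {cγ cμ : Costs V Y}
    (hun : cμ.un ≤ cγ.un) {e : V × V} (hpw : cμ.pw e = cγ.pw e) :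
    (processEdgeWith μ cμ e).un ≤ (processEdgeWith γ cγ e).un := by
  obtain ⟨hμ₁, hμ₂⟩ : (μ (edgeCost cμ e)).1 ≤ (μ (edgeCost cγ e)).1 ∧
      (μ (edgeCost cμ e)).2 ≤ (μ (edgeCost cγ e)).2 := by
    unfold edgeCost
    rw [hpw]
    exact hmono _ _ _ _ _ (hun e.1) (hun e.2)
  intro w
  simp only [processEdgeWith_un]
  split_ifs
  · exact hμ₁.trans (hdom _).1
  · exact hμ₂.trans (hdom _).2
  · exact hun w

lemma foldl_processEdgeWith_un_le {γ μ : (Y × Y → ℝ) → (Y → ℝ) × (Y → ℝ)}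
    (hdom : UpdateDominates γ μ) (hmono : IsMonotoneUpdate μ) {l : List (V × V)}
    (hl : l.Nodup) {cγ cμ : Costs V Y} (hun : cμ.un ≤ cγ.un)
    (hpw : ∀ e ∈ l, cμ.pw e = cγ.pw e) :
    (l.foldl (processEdgeWith μ) cμ).un ≤ (l.foldl (processEdgeWith γ) cγ).un := by
  induction l generalizing cγ cμ with
  | nil => exact hun
  | cons a l ih =>
    obtain ⟨ha, hl⟩ := List.nodup_cons.mp hl
    refine ih hl (processEdgeWith_un_le hdom hmono hun (hpw a List.mem_cons_self))
      fun e he => ?_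
    have hea : e ≠ a := fun h => ha (h ▸ he)
    rw [processEdgeWith_pw_of_ne _ _ hea, processEdgeWith_pw_of_ne _ _ hea]
    exact hpw e (List.mem_cons_of_mem _ he)

end BCA

theorem iteration_dominance_general {V Y : Type*} [Fintype V] [Fintype Y] [Nonempty Y] [DecidableEq V]
    (E : Finset (V × V))
    (γ μ : (Y × Y → ℝ) → (Y → ℝ) × (Y → ℝ))
    (hγbca : ∀ g : Y × Y → ℝ, fmin (fun p : Y × Y => g p - (γ g).1 p.1 - (γ g).2 p.2) = 0)
    (hμbca : ∀ g : Y × Y → ℝ, fmin (fun p : Y × Y => g p - (μ g).1 p.1 - (μ g).2 p.2) = 0)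
    (hdom : ∀ g : Y × Y → ℝ,
      (∀ s, (μ g).1 s ≤ (γ g).1 s) ∧ (∀ t, (μ g).2 t ≤ (γ g).2 t))
    (hmono : ∀ (θu θu' θv θv' : Y → ℝ) (θuv : Y × Y → ℝ),
      (∀ s, θu' s ≤ θu s) → (∀ t, θv' t ≤ θv t) →
      (∀ s, (μ (fun p => θu' p.1 + θv' p.2 + θuv p)).1 s ≤
            (μ (fun p => θu p.1 + θv p.2 + θuv p)).1 s) ∧
      (∀ t, (μ (fun p => θu' p.1 + θv' p.2 + θuv p)).2 t ≤
            (μ (fun p => θu p.1 + θv p.2 + θuv p)).2 t))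
    (order : List (V × V)) (horder : ∀ e, e ∈ order ↔ e ∈ E) (hnodup : order.Nodup)
    (c : Costs V Y) :
    dual E (order.foldl (processEdgeWith μ) c) ≤ dual E (order.foldl (processEdgeWith γ) c) := by
  have hun := foldl_processEdgeWith_un_le hdom hmono hnodup (cγ := c) le_rfl
    fun _ _ => rfl
  have hpw : ∀ e ∈ E, fmin ((order.foldl (processEdgeWith μ) c).pw e) =
      fmin ((order.foldl (processEdgeWith γ) c).pw e) := fun e he => by
    rw [fmin_foldl_processEdgeWith_pw hμbca hnodup ((horder e).mpr he),
      fmin_foldl_processEdgeWith_pw hγbca hnodup ((horder e).mpr he)]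
  unfold dual
  rw [Finset.sum_congr rfl hpw]
  gcongr with u
  exact fmin_mono (hun u)

/-- If the BCA-update `γ` dominates the BCA-update `μ` and `μ` is monotonous, then a
BCA-iteration (processing every edge once, in a fixed order) with `γ` dominates a
BCA-iteration with `μ` in the dual objective. -/
theorem iteration_dominance {V Y : Type*} [Fintype V] [Fintype Y] [Nonempty Y] [DecidableEq V]
    (E : Finset (V × V)) (hE : ∀ e ∈ E, e.1 ≠ e.2)
    (γ μ : (Y × Y → ℝ) → (Y → ℝ) × (Y → ℝ))
    (hγbca : ∀ g : Y × Y → ℝ, fmin (fun p : Y × Y => g p - (γ g).1 p.1 - (γ g).2 p.2) = 0)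
    (hμbca : ∀ g : Y × Y → ℝ, fmin (fun p : Y × Y => g p - (μ g).1 p.1 - (μ g).2 p.2) = 0)
    (hdom : ∀ g : Y × Y → ℝ,
      (∀ s, (μ g).1 s ≤ (γ g).1 s) ∧ (∀ t, (μ g).2 t ≤ (γ g).2 t))
    (hmono : ∀ (θu θu' θv θv' : Y → ℝ) (θuv : Y × Y → ℝ),
      (∀ s, θu' s ≤ θu s) → (∀ t, θv' t ≤ θv t) →
      (∀ s, (μ (fun p => θu' p.1 + θv' p.2 + θuv p)).1 s ≤
            (μ (fun p => θu p.1 + θv p.2 + θuv p)).1 s) ∧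
      (∀ t, (μ (fun p => θu' p.1 + θv' p.2 + θuv p)).2 t ≤
            (μ (fun p => θu p.1 + θv p.2 + θuv p)).2 t))
    (order : List (V × V)) (horder : ∀ e, e ∈ order ↔ e ∈ E) (hnodup : order.Nodup)
    (c : Costs V Y) :
    dual E (order.foldl (processEdgeWith μ) c) ≤ dual E (order.foldl (processEdgeWith γ) c) :=
  iteration_dominance_general E γ μ hγbca hμbca hdom hmono order horder hnodup c
end

section
/- The MPLP++ (handshake) update is a valid BCA-update: for every g : Y × Y → ℝ on a finite nonempty label set Y, writing θ^H_uv(s,t) = g(s,t) − θ^H_u(s) − θ^H_v(t), one has min_{(s,t)} θ^H_uv(s,t) = 0 (indeed min_t θ^H_uv(s,t) = 0 for every s ∈ Y), and there exists (s,t) ∈ Y × Y such that θ^H_u(s) = min_{s'} θ^H_u(s'), θ^H_v(t) = min_{t'} θ^H_v(t'), and θ^H_uv(s,t) = min_{(s',t')} θ^H_uv(s',t'). -/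
section Helpers
variable {Y : Type*} [Fintype Y] [Nonempty Y]

lemma fmin_le_s19 (f : Y → ℝ) (y : Y) : fmin f ≤ f y :=
  Finset.inf'_le _ (Finset.mem_univ y)

lemma le_fmin {a : ℝ} {f : Y → ℝ} (h : ∀ y, a ≤ f y) : a ≤ fmin f :=
  Finset.le_inf' _ _ (fun y _ => h y)

lemma exists_fmin (f : Y → ℝ) : ∃ y, fmin f = f y := by
  obtain ⟨y, _, hy⟩ := Finset.exists_mem_eq_inf' Finset.univ_nonempty f
  exact ⟨y, hy⟩

lemma fmin_sub_const (f : Y → ℝ) (c : ℝ) :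
    fmin (fun y => f y - c) = fmin f - c := by
  apply le_antisymm
  · obtain ⟨y, hy⟩ := exists_fmin f
    calc fmin (fun y => f y - c) ≤ f y - c := fmin_le_s19 _ y
      _ = fmin f - c := by rw [hy]
  · exact le_fmin fun y => sub_le_sub_right (fmin_le_s19 f y) c

end Helpers

/-- The MPLP++ (handshake) update is a valid BCA-update: the reparametrized pairwise
cost has row-wise minima zero (hence minimum zero), and there is a label pair that is
simultaneously unary-optimal at both endpoints and pairwise-optimal. -/
theorem mplpp_is_bca {Y : Type*} [Fintype Y] [Nonempty Y] (g : Y × Y → ℝ) :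
    (∀ s : Y, fmin (fun t => g (s, t) - thetaHu g s - thetaHv g t) = 0) ∧
    fmin (fun p : Y × Y => g p - thetaHu g p.1 - thetaHv g p.2) = 0 ∧
    ∃ s t : Y,
      thetaHu g s = fmin (thetaHu g) ∧
      thetaHv g t = fmin (thetaHv g) ∧
      g (s, t) - thetaHu g s - thetaHv g t
        = fmin (fun p : Y × Y => g p - thetaHu g p.1 - thetaHv g p.2) := by
  -- row minima are zero
  have row : ∀ s : Y, fmin (fun t => g (s, t) - thetaHu g s - thetaHv g t) = 0 := by
    intro s
    have h : (fun t => g (s, t) - thetaHu g s - thetaHv g t)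
        = fun t => (g (s, t) - thetaHv g t) - thetaHu g s := by
      funext t; ring
    rw [h, fmin_sub_const]
    have : fmin (fun t => g (s, t) - thetaHv g t) = thetaHu g s := rfl
    rw [this, sub_self]
  -- nonnegativity of reparametrized cost
  have nonneg : ∀ p : Y × Y, 0 ≤ g p - thetaHu g p.1 - thetaHv g p.2 := by
    intro p
    have := fmin_le_s19 (fun t => g (p.1, t) - thetaHv g t) p.2
    have h : thetaHu g p.1 ≤ g (p.1, p.2) - thetaHv g p.2 := this
    have hp : (p.1, p.2) = p := rfl
    rw [hp] at h
    linarith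
  -- global minimizer of g
  obtain ⟨p₀, hp₀⟩ := exists_fmin g
  set A := fmin g with hA
  set s₀ := p₀.1
  set t₀ := p₀.2
  have hg₀ : g (s₀, t₀) = A := by
    have : (s₀, t₀) = p₀ := rfl
    rw [this, ← hp₀]
  have hAle : ∀ p : Y × Y, A ≤ g p := fun p => fmin_le_s19 g p
  -- thetaMu bounds
  have hMu_ge : ∀ s : Y, A / 2 ≤ thetaMu g s := by
    intro s
    have h1 : A ≤ fmin (fun t => g (s, t)) := le_fmin fun t => hAle (s, t)
    unfold thetaMu; linarith
  have hMu_le : ∀ s t : Y, thetaMu g s ≤ (1 / 2) * g (s, t) := by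
    intro s t
    have h1 : fmin (fun t' => g (s, t')) ≤ g (s, t) := fmin_le_s19 _ t
    unfold thetaMu; linarith
  have hMu₀ : thetaMu g s₀ = A / 2 := by
    have h1 := hMu_le s₀ t₀
    rw [hg₀] at h1
    have h2 := hMu_ge s₀
    linarith
  -- thetaHv ≥ A/2, with equality at t₀
  have hHv_ge : ∀ t : Y, A / 2 ≤ thetaHv g t := by
    intro t
    apply le_fmin
    intro s
    have h1 := hMu_le s t
    have h2 := hAle (s, t)
    linarith
  have hHv₀ : thetaHv g t₀ = A / 2 := by
    have h1 : thetaHv g t₀ ≤ g (s₀, t₀) - thetaMu g s₀ :=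
      fmin_le_s19 (fun s => g (s, t₀) - thetaMu g s) s₀
    rw [hg₀, hMu₀] at h1
    have h2 := hHv_ge t₀
    linarith
  -- thetaHu ≥ A/2, with equality at s₀
  have hHu_ge : ∀ s : Y, A / 2 ≤ thetaHu g s := by
    intro s
    apply le_fmin
    intro t
    have h1 : thetaHv g t ≤ g (s, t) - thetaMu g s :=
      fmin_le_s19 (fun s' => g (s', t) - thetaMu g s') s
    have h2 := hMu_ge s
    linarith
  have hHu₀ : thetaHu g s₀ = A / 2 := by
    have h1 : thetaHu g s₀ ≤ g (s₀, t₀) - thetaHv g t₀ :=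
      fmin_le_s19 (fun t => g (s₀, t) - thetaHv g t) t₀
    rw [hg₀, hHv₀] at h1
    have h2 := hHu_ge s₀
    linarith
  -- pairwise min is zero
  have pair : fmin (fun p : Y × Y => g p - thetaHu g p.1 - thetaHv g p.2) = 0 := by
    apply le_antisymm
    · have h1 : fmin (fun p : Y × Y => g p - thetaHu g p.1 - thetaHv g p.2)
          ≤ g (s₀, t₀) - thetaHu g s₀ - thetaHv g t₀ :=
        fmin_le_s19 (fun p : Y × Y => g p - thetaHu g p.1 - thetaHv g p.2) (s₀, t₀)
      rw [hg₀, hHu₀, hHv₀] at h1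
      linarith
    · exact le_fmin nonneg
  refine ⟨row, pair, s₀, t₀, ?_, ?_, ?_⟩
  · apply le_antisymm
    · rw [hHu₀]; exact le_fmin hHu_ge
    · exact fmin_le_s19 (thetaHu g) s₀
  · apply le_antisymm
    · rw [hHv₀]; exact le_fmin hHv_ge
    · exact fmin_le_s19 (thetaHv g) t₀
  · rw [hg₀, hHu₀, hHv₀, pair]; ring
end
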